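/- Let f : D → {0,1} be a non-constant n-bit partial Boolean function. Then f can be computed exactly by a quantum 1-query algorithm if and only if there exists a degree-1 SOS complex representation matrix of f and its negation, given by vectors α¹, …, α^{p+q} ∈ ℂ^{n+1}, whose n+1 columns (α¹_i, …, α^{p+q}_i) ∈ ℂ^{p+q}, for i ∈ {0,1,…,n}, are pairwise orthogonal. -/

import Mathlib

open scoped BigOperators

noncomputable section

/-- The quantum oracle `O_x`, as a diagonal matrix acting on `ℂ^{(n+1)m}`, whose basis
vectors are indexed by pairs `(i, j)` with `i ∈ {0, 1, …, n}` (encoded as `Option (Fin n)`,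
`none` playing the role of `0`) and `j ∈ {1, …, m}`. -/
def oracleMat (n m : ℕ) (x : Fin n → Bool) :
    Matrix (Option (Fin n) × Fin m) (Option (Fin n) × Fin m) ℂ :=
  Matrix.diagonal fun p =>
    match p.1 with
    | none => 1
    | some i => if x i then -1 else 1

/-- Squared Euclidean norm of a complex vector. -/
def vecNormSq {ι : Type*} [Fintype ι] (v : ι → ℂ) : ℝ :=
  ∑ i, Complex.normSq (v i)

/-- The partial Boolean function `f` with domain (promised set) `D` is computed exactly by a
quantum 1-query algorithm: there are `m ≥ 1`, a unit vector `ψ`, unitaries `U₀, U₁` and an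
orthogonal projection `P` with `‖P U₁ O_x U₀ ψ‖² = f x` for all `x ∈ D`. -/
def ComputedExactly1 {n : ℕ} (D : Set (Fin n → Bool)) (f : (Fin n → Bool) → Bool) : Prop :=
  ∃ m : ℕ, 1 ≤ m ∧
    ∃ ψ : Option (Fin n) × Fin m → ℂ, vecNormSq ψ = 1 ∧
      ∃ U₀ U₁ P : Matrix (Option (Fin n) × Fin m) (Option (Fin n) × Fin m) ℂ,
        U₀ ∈ Matrix.unitaryGroup (Option (Fin n) × Fin m) ℂ ∧
        U₁ ∈ Matrix.unitaryGroup (Option (Fin n) × Fin m) ℂ ∧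
        P.IsHermitian ∧ P * P = P ∧
        ∀ x ∈ D, vecNormSq ((P * U₁ * oracleMat n m x * U₀).mulVec ψ) = if f x then 1 else 0

/-- A multilinear polynomial: degree at most 1 in each variable. -/
def IsMultilinear {n : ℕ} (p : MvPolynomial (Fin n) ℝ) : Prop :=
  ∀ i, p.degreeOf i ≤ 1

/-- `p` represents the partial Boolean function `f` on the promised set `D`. -/
def Represents {n : ℕ} (p : MvPolynomial (Fin n) ℝ)
    (D : Set (Fin n → Bool)) (f : (Fin n → Bool) → Bool) : Prop :=
  ∀ x ∈ D, MvPolynomial.eval (fun i => if x i then (1 : ℝ) else 0) p = if f x then 1 else 0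

/-- `f` (with domain `D`) depends on `k` bits: `k` is the minimum, over all multilinear
polynomials representing `f`, of the number of variables occurring. -/
def DependsOnBits {n : ℕ} (D : Set (Fin n → Bool)) (f : (Fin n → Bool) → Bool) (k : ℕ) : Prop :=
  IsLeast {c | ∃ p : MvPolynomial (Fin n) ℝ,
    IsMultilinear p ∧ Represents p D f ∧ p.vars.card = c} k

/-- The Fourier basis vector `|F(x)⟩₁ = (1, (−1)^{x_1}, …, (−1)^{x_n})`. -/
def fourierVec {n : ℕ} (x : Fin n → Bool) : Option (Fin n) → ℂ :=
  fun o => match o with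
  | none => 1
  | some i => if x i then -1 else 1

/-- The polynomial basis vector `(1, x₁, …, xₙ)`. -/
def polyVec {n : ℕ} (x : Fin n → Bool) : Option (Fin n) → ℝ :=
  fun o => match o with
  | none => 1
  | some i => if x i then 1 else 0

/-- A degree-1 SOS complex representation matrix of `f` and its negation, given by the
rows `α l` (`l < p` for `f`, `p ≤ l < p + q` for the negation of `f`). -/
def SOSRep {n : ℕ} (D : Set (Fin n → Bool)) (f : (Fin n → Bool) → Bool)
    (p q : ℕ) (α : Fin (p + q) → Option (Fin n) → ℂ) : Prop :=
  (∀ x ∈ D, ∑ l : Fin p,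
      Complex.normSq (∑ i, (starRingEnd ℂ) (α (Fin.castAdd q l) i) * fourierVec x i)
      = if f x then 1 else 0) ∧
  (∀ x ∈ D, ∑ l : Fin q,
      Complex.normSq (∑ i, (starRingEnd ℂ) (α (Fin.natAdd p l) i) * fourierVec x i)
      = if f x then 0 else 1) ∧
  (∀ x : Fin n → Bool, ∑ l : Fin (p + q),
      Complex.normSq (∑ i, (starRingEnd ℂ) (α l i) * fourierVec x i) = 1)

/-- `rank(G_f(1,b))`: the dimension of the real span of the vectors `(1, x₁, …, xₙ)`
over all `x ∈ D` with `f x = b`. -/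
def rankG {n : ℕ} (D : Set (Fin n → Bool)) (f : (Fin n → Bool) → Bool) (b : Bool) : ℕ :=
  Module.finrank ℝ (Submodule.span ℝ (polyVec '' {x ∈ D | f x = b}))

end

/-!
Both directions rest on one identity: the oracle acts on a state `φ` as
`O_x φ = ∑ᵢ F(x)ᵢ (eᵢ ⊗ φᵢ)`, where `φᵢ` is the block of `φ` with first index `i`, so every
amplitude of `M O_x φ` is a linear form in `F(x)₁`. Given an algorithm, with `φ = U₀ ψ`, the
amplitudes of `P U₁ O_x φ` and of `(1 - P) U₁ O_x φ` give the SOS rows for `f` and its negation.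
Column `i` of this matrix is (up to conjugation) `U₁ (eᵢ ⊗ φᵢ)` split by `P` and `1 - P`; the
split preserves inner products, and so does `U₁`, so the columns are orthogonal because the blocks
`eᵢ ⊗ φᵢ` are. Conversely, if the columns `cᵢ` of an SOS matrix are orthogonal, the states
`eᵢ ⊗ c̄ᵢ` and `e₀ ⊗ c̄ᵢ` have the same Gram matrix, so a unitary `U₁` maps one family to the
other; starting from `ψ = ∑ᵢ eᵢ ⊗ c̄ᵢ`, the state `U₁ O_x ψ` is then `e₀ ⊗ (⟨αˡ, F(x)₁⟩)ₗ`, and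
projecting onto the first `p` rows computes `f`.
-/

open Matrix WithLp ComplexConjugate
open scoped InnerProductSpace

section Isometry

variable {𝕜 E ι : Type*} [RCLike 𝕜] [NormedAddCommGroup E] [InnerProductSpace 𝕜 E] [Fintype ι]

theorem norm_sum_smul_eq_of_inner_eq {s t : ι → E} (h : ∀ i j, ⟪s i, s j⟫_𝕜 = ⟪t i, t j⟫_𝕜)
    (c : ι → 𝕜) : ‖∑ i, c i • s i‖ = ‖∑ i, c i • t i‖ := by
  have key : ⟪∑ i, c i • s i, ∑ i, c i • s i⟫_𝕜 = ⟪∑ i, c i • t i, ∑ i, c i • t i⟫_𝕜 := by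
    simp only [sum_inner, inner_sum, inner_smul_left, inner_smul_right, h]
  rw [inner_self_eq_norm_sq_to_K, inner_self_eq_norm_sq_to_K] at key
  exact (sq_eq_sq₀ (norm_nonneg _) (norm_nonneg _)).1 (by exact_mod_cast key)

theorem exists_linearIsometryEquiv_apply_eq_of_orthogonal [FiniteDimensional 𝕜 E]
    {s t : ι → E} (hs : Pairwise fun i j => ⟪s i, s j⟫_𝕜 = 0)
    (h : ∀ i j, ⟪s i, s j⟫_𝕜 = ⟪t i, t j⟫_𝕜) :
    ∃ L : E ≃ₗᵢ[𝕜] E, ∀ i, L (s i) = t i := by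
  -- `T` sends each `s j` to `t j`; it is isometric on the span of the `s i`, then extended.
  let T : E →ₗ[𝕜] E := ∑ i, ((‖s i‖ : 𝕜) ^ 2)⁻¹ • (innerₛₗ 𝕜 (s i)).smulRight (t i)
  have hT (j : ι) : T (s j) = t j := by
    simp only [T, LinearMap.sum_apply, LinearMap.smul_apply, LinearMap.smulRight_apply,
      innerₛₗ_apply_apply]
    rw [Finset.sum_eq_single j (fun i _ hij => by rw [hs hij, zero_smul, smul_zero])
      (by simp), ← inner_self_eq_norm_sq_to_K, smul_smul]
    by_cases hsj : s j = 0
    · have htj : t j = 0 := by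
        rw [← inner_self_eq_zero (𝕜 := 𝕜), ← h, hsj, inner_zero_left]
      simp [htj]
    · rw [inv_mul_cancel₀ (inner_self_ne_zero.2 hsj), one_smul]
  let K := Submodule.span 𝕜 (Set.range s)
  let L₀ : K →ₗᵢ[𝕜] E :=
    { T.domRestrict K with
      norm_map' := by
        rintro ⟨v, hv⟩
        obtain ⟨c, rfl⟩ := (Submodule.mem_span_range_iff_exists_fun 𝕜).1 hv
        simp [map_sum, hT, norm_sum_smul_eq_of_inner_eq h c] }
  refine ⟨L₀.extend.toLinearIsometryEquiv rfl, fun i => ?_⟩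
  simpa [L₀, hT] using L₀.extend_apply ⟨s i, Submodule.subset_span ⟨i, rfl⟩⟩

end Isometry

section UnitaryMatrix

variable {𝕜 B ι : Type*} [RCLike 𝕜] [Fintype B] [DecidableEq B]

theorem LinearIsometryEquiv.exists_mem_unitaryGroup_mulVec_eq
    (L : EuclideanSpace 𝕜 B ≃ₗᵢ[𝕜] EuclideanSpace 𝕜 B) :
    ∃ U ∈ unitaryGroup B 𝕜, ∀ v, U *ᵥ v = ofLp (L (toLp 2 v)) := by
  let u := Unitary.linearIsometryEquiv.symm L
  refine ⟨(toEuclideanCLM (n := B) (𝕜 := 𝕜)).symm u,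
    Unitary.map_mem (toEuclideanCLM (n := B) (𝕜 := 𝕜)).symm.toStarAlgHom u.prop, fun v => ?_⟩
  rw [← ofLp_toEuclideanCLM]
  simp [u]

theorem Matrix.exists_mem_unitaryGroup_mulVec_eq_of_orthogonal [Fintype ι] {s t : ι → B → 𝕜}
    (hs : Pairwise fun i j => star (s i) ⬝ᵥ s j = 0)
    (h : ∀ i j, star (s i) ⬝ᵥ s j = star (t i) ⬝ᵥ t j) :
    ∃ U ∈ unitaryGroup B 𝕜, ∀ i, U *ᵥ s i = t i := by
  have inner_toLp (u v : B → 𝕜) : ⟪toLp 2 u, toLp 2 v⟫_𝕜 = star u ⬝ᵥ v := by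
    rw [EuclideanSpace.inner_eq_star_dotProduct, dotProduct_comm]
  obtain ⟨L, hL⟩ := exists_linearIsometryEquiv_apply_eq_of_orthogonal (𝕜 := 𝕜)
    (s := fun i => toLp 2 (s i)) (t := fun i => toLp 2 (t i))
    (fun i j hij => by simpa only [inner_toLp] using hs hij) (by simpa only [inner_toLp] using h)
  obtain ⟨U, hU, hUL⟩ := L.exists_mem_unitaryGroup_mulVec_eq
  exact ⟨U, hU, fun i => by rw [hUL, hL]⟩

end UnitaryMatrix

section VecNormSq

variable {ι κ : Type*} [Fintype ι] [Fintype κ]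

theorem ofReal_vecNormSq (v : ι → ℂ) : (vecNormSq v : ℂ) = star v ⬝ᵥ v := by
  simp [vecNormSq, dotProduct, Complex.normSq_eq_conj_mul_self]

theorem vecNormSq_comp_equiv (v : κ → ℂ) (e : ι ≃ κ) : vecNormSq (v ∘ e) = vecNormSq v :=
  e.sum_comp fun b => Complex.normSq (v b)

theorem vecNormSq_ite_lt {p q : ℕ} (v : Fin (p + q) → ℂ) :
    vecNormSq (fun l : Fin (p + q) => if (l : ℕ) < p then v l else 0) =
      vecNormSq fun l => v (Fin.castAdd q l) := by
  simp [vecNormSq, Fin.sum_univ_add]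

theorem Matrix.star_mulVec_dotProduct_mulVec (M : Matrix ι ι ℂ) (u v : ι → ℂ) :
    star (M *ᵥ u) ⬝ᵥ (M *ᵥ v) = star u ⬝ᵥ (Mᴴ * M) *ᵥ v := by
  rw [star_mulVec, dotProduct_mulVec, vecMul_vecMul, ← dotProduct_mulVec]

variable [DecidableEq ι]

theorem Matrix.star_mulVec_dotProduct_mulVec_add {M N : Matrix ι ι ℂ}
    (h : Mᴴ * M + Nᴴ * N = 1) (u v : ι → ℂ) :
    star (M *ᵥ u) ⬝ᵥ (M *ᵥ v) + star (N *ᵥ u) ⬝ᵥ (N *ᵥ v) = star u ⬝ᵥ v := by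
  rw [star_mulVec_dotProduct_mulVec, star_mulVec_dotProduct_mulVec, ← dotProduct_add,
    ← add_mulVec, h, one_mulVec]

theorem vecNormSq_mulVec_add {M N : Matrix ι ι ℂ} (h : Mᴴ * M + Nᴴ * N = 1) (v : ι → ℂ) :
    vecNormSq (M *ᵥ v) + vecNormSq (N *ᵥ v) = vecNormSq v := by
  have key : ((vecNormSq (M *ᵥ v) + vecNormSq (N *ᵥ v) : ℝ) : ℂ) = vecNormSq v := by
    push_cast [ofReal_vecNormSq]
    exact star_mulVec_dotProduct_mulVec_add h v v
  exact_mod_cast key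

theorem vecNormSq_mulVec_of_mem_unitaryGroup {U : Matrix ι ι ℂ} (hU : U ∈ unitaryGroup ι ℂ)
    (v : ι → ℂ) : vecNormSq (U *ᵥ v) = vecNormSq v := by
  have hU' : Uᴴ * U + (0 : Matrix ι ι ℂ)ᴴ * 0 = 1 := by
    rw [Matrix.mul_zero, add_zero]
    exact mem_unitaryGroup_iff'.1 hU
  simpa [vecNormSq] using vecNormSq_mulVec_add hU' v

theorem Matrix.conjTranspose_mul_add_of_isHermitian_of_idempotent {P U : Matrix ι ι ℂ}
    (hP : P.IsHermitian) (hPP : P * P = P) (hU : U ∈ unitaryGroup ι ℂ) :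
    (P * U)ᴴ * (P * U) + ((1 - P) * U)ᴴ * ((1 - P) * U) = 1 := by
  have hproj : Pᴴ * P + (1 - P)ᴴ * (1 - P) = 1 := by
    rw [conjTranspose_sub, conjTranspose_one, hP.eq, sub_mul, mul_sub, mul_sub, hPP]
    simp
  rw [conjTranspose_mul, conjTranspose_mul, Matrix.mul_assoc, Matrix.mul_assoc,
    ← Matrix.mul_assoc Pᴴ, ← Matrix.mul_assoc (1 - P)ᴴ, ← Matrix.mul_add, ← Matrix.add_mul,
    hproj, Matrix.one_mul]
  exact mem_unitaryGroup_iff'.1 hU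

end VecNormSq

section DiagonalProjection

variable {ι R : Type*} [DecidableEq ι] [Semiring R] (c : ι → Prop) [DecidablePred c]

theorem Matrix.isHermitian_diagonal_ite [StarRing R] :
    (diagonal fun i => if c i then (1 : R) else 0).IsHermitian :=
  isHermitian_diagonal_iff.2 fun i => by split_ifs <;> simp

theorem Matrix.diagonal_ite_mul_self [Fintype ι] :
    (diagonal fun i => if c i then (1 : R) else 0) * (diagonal fun i => if c i then 1 else 0) =
      diagonal fun i => if c i then 1 else 0 := by
  rw [diagonal_mul_diagonal]
  congr 1
  funext i
  split_ifs <;> simp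

end DiagonalProjection

section BlockVec

variable {ι κ : Type*} [Fintype ι] [Fintype κ] [DecidableEq ι]

/-- The vector `eᵢ ⊗ v`. -/
def blockVec {R : Type*} [Zero R] (i : ι) (v : κ → R) : ι × κ → R :=
  fun b => if b.1 = i then v b.2 else 0

theorem star_blockVec_dotProduct_blockVec {R : Type*} [NonUnitalSemiring R] [StarRing R]
    (i j : ι) (u v : κ → R) :
    star (blockVec i u) ⬝ᵥ blockVec j v = if i = j then star u ⬝ᵥ v else 0 := by
  simp only [dotProduct, Fintype.sum_prod_type, blockVec, Pi.star_apply, apply_ite star,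
    star_zero, ite_mul, mul_ite, zero_mul, mul_zero]
  split_ifs with hij
  · subst hij
    simp
  · simp [Ne.symm hij]

theorem vecNormSq_blockVec (i : ι) (v : κ → ℂ) : vecNormSq (blockVec i v) = vecNormSq v := by
  have key : (vecNormSq (blockVec i v) : ℂ) = vecNormSq v := by
    rw [ofReal_vecNormSq, ofReal_vecNormSq, star_blockVec_dotProduct_blockVec, if_pos rfl]
  exact_mod_cast key

theorem exists_mem_unitaryGroup_mulVec_blockVec_eq [DecidableEq κ] (i₀ : ι) {c : ι → κ → ℂ}
    (hc : Pairwise fun i j => star (c i) ⬝ᵥ c j = 0) :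
    ∃ U ∈ unitaryGroup (ι × κ) ℂ, ∀ i, U *ᵥ blockVec i (c i) = blockVec i₀ (c i) := by
  refine exists_mem_unitaryGroup_mulVec_eq_of_orthogonal (s := fun i => blockVec i (c i))
    (t := fun i => blockVec i₀ (c i))
    (fun i j hij => by simp only [star_blockVec_dotProduct_blockVec, if_neg hij]) fun i j => ?_
  simp only [star_blockVec_dotProduct_blockVec, if_true]
  split_ifs with hij
  · rfl
  · exact (hc hij).symm

end BlockVec

section Oracle

variable {n m : ℕ}

theorem conj_fourierVec (x : Fin n → Bool) (i : Option (Fin n)) :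
    conj (fourierVec x i) = fourierVec x i := by
  cases i <;> simp [fourierVec, apply_ite conj]

theorem fourierVec_mul_self (x : Fin n → Bool) (i : Option (Fin n)) :
    fourierVec x i * fourierVec x i = 1 := by
  cases i with
  | none => simp [fourierVec]
  | some i => by_cases hx : x i <;> simp [fourierVec, hx]

theorem oracleMat_eq_diagonal (x : Fin n → Bool) :
    oracleMat n m x = diagonal fun b => fourierVec x b.1 :=
  rfl

theorem oracleMat_mem_unitaryGroup (x : Fin n → Bool) :
    oracleMat n m x ∈ unitaryGroup (Option (Fin n) × Fin m) ℂ := by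
  rw [mem_unitaryGroup_iff', oracleMat_eq_diagonal, star_eq_conjTranspose,
    diagonal_conjTranspose, diagonal_mul_diagonal, ← diagonal_one]
  congr 1
  funext b
  simp only [Pi.star_apply, RCLike.star_def, conj_fourierVec, fourierVec_mul_self]

theorem oracleMat_mulVec (x : Fin n → Bool) (φ : Option (Fin n) × Fin m → ℂ) :
    oracleMat n m x *ᵥ φ = ∑ i, fourierVec x i • blockVec i fun j => φ (i, j) := by
  funext b
  simp [oracleMat_eq_diagonal, mulVec_diagonal, Finset.sum_apply, blockVec]

/-- The vector `(⟨β l, F(x)₁⟩)_l`. -/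
def fourierPairing {L : Type*} (β : L → Option (Fin n) → ℂ) (x : Fin n → Bool) : L → ℂ :=
  fun l => ∑ i, conj (β l i) * fourierVec x i

def amplitudeCoeffs (M : Matrix (Option (Fin n) × Fin m) (Option (Fin n) × Fin m) ℂ)
    (φ : Option (Fin n) × Fin m → ℂ) : Option (Fin n) × Fin m → Option (Fin n) → ℂ :=
  fun b i => conj ((M *ᵥ blockVec i fun j => φ (i, j)) b)

theorem mul_oracleMat_mulVec (M : Matrix (Option (Fin n) × Fin m) (Option (Fin n) × Fin m) ℂ)
    (φ : Option (Fin n) × Fin m → ℂ) (x : Fin n → Bool) :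
    (M * oracleMat n m x) *ᵥ φ = fourierPairing (amplitudeCoeffs M φ) x := by
  funext b
  rw [← mulVec_mulVec, oracleMat_mulVec, mulVec_sum, Finset.sum_apply]
  simp [mulVec_smul, fourierPairing, amplitudeCoeffs, mul_comm]

theorem sum_conj_amplitudeCoeffs_mul
    (M : Matrix (Option (Fin n) × Fin m) (Option (Fin n) × Fin m) ℂ)
    (φ : Option (Fin n) × Fin m → ℂ) (i j : Option (Fin n)) :
    ∑ b, conj (amplitudeCoeffs M φ b i) * amplitudeCoeffs M φ b j =
      star (M *ᵥ blockVec j fun k => φ (j, k)) ⬝ᵥ (M *ᵥ blockVec i fun k => φ (i, k)) := by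
  simp [amplitudeCoeffs, dotProduct, mul_comm]

end Oracle

section SOS

variable {n : ℕ} (D : Set (Fin n → Bool)) (f : (Fin n → Bool) → Bool) {p q : ℕ}

theorem sosRep_iff (α : Fin (p + q) → Option (Fin n) → ℂ) :
    SOSRep D f p q α ↔
      (∀ x ∈ D, vecNormSq (fourierPairing (fun l => α (Fin.castAdd q l)) x) =
        if f x then 1 else 0) ∧
      (∀ x ∈ D, vecNormSq (fourierPairing (fun l => α (Fin.natAdd p l)) x) =
        if f x then 0 else 1) ∧
      ∀ x, vecNormSq (fourierPairing α x) = 1 :=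
  Iff.rfl

theorem sosRep_append (β : Fin p → Option (Fin n) → ℂ) (γ : Fin q → Option (Fin n) → ℂ) :
    SOSRep D f p q (Fin.append β γ) ↔
      (∀ x ∈ D, vecNormSq (fourierPairing β x) = if f x then 1 else 0) ∧
      (∀ x ∈ D, vecNormSq (fourierPairing γ x) = if f x then 0 else 1) ∧
      ∀ x, vecNormSq (fourierPairing β x) + vecNormSq (fourierPairing γ x) = 1 := by
  have hsum (x : Fin n → Bool) : vecNormSq (fourierPairing (Fin.append β γ) x) =
      vecNormSq (fourierPairing β x) + vecNormSq (fourierPairing γ x) := by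
    simp only [vecNormSq, fourierPairing, Fin.sum_univ_add, Fin.append_left, Fin.append_right]
  simp only [sosRep_iff, Fin.append_left, Fin.append_right, hsum]

end SOS

section Characterization

variable {n : ℕ} {D : Set (Fin n → Bool)} {f : (Fin n → Bool) → Bool}

theorem ComputedExactly1.exists_sosRep (h : ComputedExactly1 D f) :
    ∃ p q : ℕ, 1 ≤ p ∧ 1 ≤ q ∧ ∃ α : Fin (p + q) → Option (Fin n) → ℂ,
      SOSRep D f p q α ∧ ∀ i j, i ≠ j → ∑ l, conj (α l i) * α l j = 0 := by
  obtain ⟨m, hm, ψ, hψ, U₀, U₁, P, hU₀, hU₁, hP, hPP, hcomp⟩ := h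
  have : NeZero m := ⟨by omega⟩
  let e := (Fintype.equivFin (Option (Fin n) × Fin m)).symm
  let φ := U₀ *ᵥ ψ
  let β := amplitudeCoeffs (P * U₁) φ
  let γ := amplitudeCoeffs ((1 - P) * U₁) φ
  have hproj := conjTranspose_mul_add_of_isHermitian_of_idempotent hP hPP hU₁
  have he (δ : Option (Fin n) × Fin m → Option (Fin n) → ℂ) (x : Fin n → Bool) :
      vecNormSq (fourierPairing (δ ∘ e) x) = vecNormSq (fourierPairing δ x) :=
    vecNormSq_comp_equiv (fourierPairing δ x) e
  have hβ (x : Fin n → Bool) :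
      vecNormSq ((P * U₁ * oracleMat n m x * U₀) *ᵥ ψ) = vecNormSq (fourierPairing β x) := by
    rw [← mulVec_mulVec, mul_oracleMat_mulVec]
  have hβγ (x : Fin n → Bool) :
      vecNormSq (fourierPairing β x) + vecNormSq (fourierPairing γ x) = 1 := by
    rw [← mul_oracleMat_mulVec, ← mul_oracleMat_mulVec, ← mulVec_mulVec φ (P * U₁),
      ← mulVec_mulVec φ ((1 - P) * U₁), vecNormSq_mulVec_add hproj,
      vecNormSq_mulVec_of_mem_unitaryGroup (oracleMat_mem_unitaryGroup x),
      vecNormSq_mulVec_of_mem_unitaryGroup hU₀, hψ]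
  refine ⟨_, _, Fintype.card_pos, Fintype.card_pos, Fin.append (β ∘ e) (γ ∘ e),
    (sosRep_append D f _ _).2 ⟨fun x hx => ?_, fun x hx => ?_, fun x => ?_⟩, fun i j hij => ?_⟩
  · rw [he, ← hβ]
    exact hcomp x hx
  · have hx' := hβγ x
    rw [← hβ, hcomp x hx] at hx'
    rw [he]
    split_ifs at hx' ⊢ <;> linarith
  · rw [he, he]
    exact hβγ x
  · rw [Fin.sum_univ_add]
    simp only [Fin.append_left, Fin.append_right, Function.comp_apply]
    rw [e.sum_comp fun b => conj (β b i) * β b j, e.sum_comp fun b => conj (γ b i) * γ b j,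
      sum_conj_amplitudeCoeffs_mul, sum_conj_amplitudeCoeffs_mul,
      star_mulVec_dotProduct_mulVec_add hproj, star_blockVec_dotProduct_blockVec, if_neg hij.symm]

theorem ComputedExactly1.of_sosRep {p q : ℕ} {α : Fin (p + q) → Option (Fin n) → ℂ}
    (hrep : SOSRep D f p q α) (horth : ∀ i j, i ≠ j → ∑ l, conj (α l i) * α l j = 0) :
    ComputedExactly1 D f := by
  obtain ⟨hf, -, hone⟩ := (sosRep_iff D f α).1 hrep
  have hpq : 1 ≤ p + q := by
    by_contra h0
    have h := hone fun _ => false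
    rw [vecNormSq, Finset.sum_eq_zero fun l _ => absurd l.isLt (by omega)] at h
    exact zero_ne_one h
  let c (i : Option (Fin n)) (l : Fin (p + q)) : ℂ := conj (α l i)
  obtain ⟨U, hU, hUc⟩ := exists_mem_unitaryGroup_mulVec_blockVec_eq none (c := c) fun i j hij => by
    simpa [dotProduct, c, mul_comm] using congrArg conj (horth i j hij)
  let ψ (b : Option (Fin n) × Fin (p + q)) : ℂ := c b.1 b.2
  have hUψ (x : Fin n → Bool) :
      U *ᵥ (oracleMat n (p + q) x *ᵥ ψ) = blockVec none (fourierPairing α x) := by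
    rw [oracleMat_mulVec, mulVec_sum]
    simp only [mulVec_smul, ψ, hUc]
    funext b
    simp [blockVec, Finset.sum_apply, fourierPairing, c, mul_comm]
  let P : Matrix (Option (Fin n) × Fin (p + q)) (Option (Fin n) × Fin (p + q)) ℂ :=
    diagonal fun b => if (b.2 : ℕ) < p then 1 else 0
  have hP (v : Fin (p + q) → ℂ) :
      P *ᵥ blockVec none v =
        blockVec none fun l : Fin (p + q) => if (l : ℕ) < p then v l else 0 := by
    funext b
    simp [P, mulVec_diagonal, blockVec]
  refine ⟨p + q, hpq, ψ, ?_, 1, U, P, one_mem _, hU, isHermitian_diagonal_ite _,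
    diagonal_ite_mul_self _, fun x hx => ?_⟩
  · rw [← vecNormSq_mulVec_of_mem_unitaryGroup (oracleMat_mem_unitaryGroup fun _ => false),
      ← vecNormSq_mulVec_of_mem_unitaryGroup hU, hUψ, vecNormSq_blockVec, hone]
  · rw [Matrix.mul_one, ← mulVec_mulVec, ← mulVec_mulVec, hUψ, hP, vecNormSq_blockVec,
      vecNormSq_ite_lt]
    exact hf x hx

end Characterization

theorem stmt_7_general (n : ℕ) (D : Set (Fin n → Bool)) (f : (Fin n → Bool) → Bool) :
    ComputedExactly1 D f ↔
      ∃ p q : ℕ, 1 ≤ p ∧ 1 ≤ q ∧ ∃ α : Fin (p + q) → Option (Fin n) → ℂ,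
        SOSRep D f p q α ∧
        ∀ i j : Option (Fin n), i ≠ j →
          ∑ l : Fin (p + q), (starRingEnd ℂ) (α l i) * α l j = 0 :=
  ⟨ComputedExactly1.exists_sosRep,
    fun ⟨_, _, _, _, _, hrep, horth⟩ => ComputedExactly1.of_sosRep hrep horth⟩

theorem stmt_7 (n : ℕ) (D : Set (Fin n → Bool)) (f : (Fin n → Bool) → Bool)
    (hnc : (∃ x ∈ D, f x = false) ∧ (∃ y ∈ D, f y = true)) :
    ComputedExactly1 D f ↔
      ∃ p q : ℕ, 1 ≤ p ∧ 1 ≤ q ∧ ∃ α : Fin (p + q) → Option (Fin n) → ℂ,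
        SOSRep D f p q α ∧
        ∀ i j : Option (Fin n), i ≠ j →
          ∑ l : Fin (p + q), (starRingEnd ℂ) (α l i) * α l j = 0 :=
  stmt_7_general n D f
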